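/- For n ≥ 3, the set W_{2^{n−1}−1,2} is invariant under the circle action ((r,s),(a,b)) ↦ (ra − sb, sa + rb): if (a,b) are doubly pure with ‖a‖ = ‖b‖ = 1, ⟨a,b⟩ = 0, ⟨ã,b⟩ = 0 and ⟨a,b̃⟩ = 0, and r² + s² = 1, then the pair (ra − sb, sa + rb) again satisfies ⟨ra − sb, sa + rb⟩ = 0 and ⟨(ra − sb)~, sa + rb⟩ = 0, i.e. (ra − sb, sa + rb) ∈ W_{2^{n−1}−1,2}. -/

import Mathlib

noncomputable section

/-- The Cayley–Dickson algebra `A n` of dimension `2^n` over `ℝ`: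
`A 0 = ℝ` and `A (n+1) = A n × A n`. -/
def CD : ℕ → Type
  | 0 => ℝ
  | n + 1 => CD n × CD n

namespace CD

instance instAddCommGroup : (n : ℕ) → AddCommGroup (CD n)
  | 0 => inferInstanceAs (AddCommGroup ℝ)
  | n + 1 =>
    letI := instAddCommGroup n
    inferInstanceAs (AddCommGroup (CD n × CD n))

instance instModule : (n : ℕ) → Module ℝ (CD n)
  | 0 => inferInstanceAs (Module ℝ ℝ)
  | n + 1 =>
    letI := instAddCommGroup n
    letI := instModule n
    inferInstanceAs (Module ℝ (CD n × CD n))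

/-- Conjugation: `x̄ = x` on `ℝ` and `(x₁,x₂)‾ = (x̄₁, -x₂)`. -/
protected def conj : {n : ℕ} → CD n → CD n
  | 0, x => x
  | _ + 1, x => (CD.conj x.1, -x.2)

/-- Cayley–Dickson multiplication: `(a,b)(x,y) = (ax - ȳb, ya + bx̄)`. -/
protected def mul : {n : ℕ} → CD n → CD n → CD n
  | 0, x, y => (show ℝ from x) * (show ℝ from y)
  | _ + 1, x, y =>
    (CD.mul x.1 y.1 - CD.mul (CD.conj y.2) x.2,
     CD.mul y.2 x.1 + CD.mul x.2 (CD.conj y.1))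

instance instMul (n : ℕ) : Mul (CD n) := ⟨CD.mul⟩

/-- The multiplicative unit `e₀` of `A n`. -/
def e0 : (n : ℕ) → CD n
  | 0 => (1 : ℝ)
  | n + 1 => (e0 n, 0)

/-- The element `ẽ₀ = (0, e₀)` of `A n` (junk value `0` for `n = 0`). -/
def te0 : (n : ℕ) → CD n
  | 0 => 0
  | n + 1 => (0, e0 n)

/-- The "complexification" `α̃ = (-b, a)` of `α = (a,b)` (junk value `0` for `n = 0`);
note `α̃ = α·ẽ₀`. -/
def tilde : {n : ℕ} → CD n → CD n
  | 0, _ => 0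
  | _ + 1, x => (-x.2, x.1)

/-- The standard inner product on `A n ≅ ℝ^{2^n}`. -/
protected def inner : {n : ℕ} → CD n → CD n → ℝ
  | 0, x, y => (show ℝ from x) * (show ℝ from y)
  | _ + 1, x, y => CD.inner x.1 y.1 + CD.inner x.2 y.2

/-- The euclidean norm on `A n`. -/
protected def norm {n : ℕ} (x : CD n) : ℝ := Real.sqrt (CD.inner x x)

/-- `x` is pure if its trace `t(x) = x + x̄` vanishes. -/
def IsPure {n : ℕ} (x : CD n) : Prop := x + CD.conj x = 0

/-- `x = (a,b)` is doubly pure if both `a` and `b` are pure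
(equivalently, both `x` and `x̃` are pure). -/
def IsDoublyPure : {n : ℕ} → CD n → Prop
  | 0, x => x = 0
  | _ + 1, x => IsPure x.1 ∧ IsPure x.2

/-- The associator `(x,y,z) = (xy)z - x(yz)`. -/
def assoc {n : ℕ} (x y z : CD n) : CD n := (x * y) * z - x * (y * z)

/-- The subspace `ℍ_a`: the real span of `{e₀, ã, a, ẽ₀}`. -/
def Ha {n : ℕ} (a : CD n) : Submodule ℝ (CD n) :=
  Submodule.span ℝ {e0 n, tilde a, a, te0 n}

/-- The orthogonal complement `ℍ_a^⊥` of `ℍ_a` in `A n`. -/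
def HaPerp {n : ℕ} (a : CD n) : Set (CD n) :=
  {x | ∀ y ∈ Ha a, CD.inner x y = 0}

/-- The element `ε = (ẽ₀, 0)` of `A (n+1)`. -/
def eps (n : ℕ) : CD (n + 1) := (te0 n, 0)

/-- `α̂ = (b,a)` for `α = (a,b) ∈ A (n+1)`. -/
def hat {n : ℕ} (x : CD (n + 1)) : CD (n + 1) := (x.2, x.1)

/-- The element `(a, b)` of `A (n+1) = A n × A n`. -/
def pair {n : ℕ} (a b : CD n) : CD (n + 1) := (a, b)

end CD

/-- The real Stiefel manifold `V_{2^n-2,2}`: orthonormal pairs of doubly pure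
elements of `A n`. -/
def V2 (n : ℕ) : Set (CD n × CD n) :=
  {p | CD.IsDoublyPure p.1 ∧ CD.IsDoublyPure p.2 ∧
    CD.norm p.1 = 1 ∧ CD.norm p.2 = 1 ∧ CD.inner p.1 p.2 = 0}

/-- The complex Stiefel manifold `W_{2^{n-1}-1,2}` realized as the pairs
`(a,b) ∈ V_{2^n-2,2}` with `b ∈ ℍ_a^⊥`. -/
def W (n : ℕ) : Set (CD n × CD n) := {p ∈ V2 n | p.2 ∈ CD.HaPerp p.1}

/-!
The rotation by `(r, s)` acts isometrically on the plane spanned by `a` and `b`, so orthonormality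
and double purity are preserved. The only other condition is `⟨ã, b⟩ = 0`; since `x ↦ x̃` is
skew-adjoint (`⟨x̃, y⟩ = -⟨x, ỹ⟩`, hence `⟨x̃, x⟩ = 0`), the rotated pair gives
`⟨(ra - sb)~, sa + rb⟩ = (r² + s²) ⟨ã, b⟩ = 0`.
-/

namespace CD

theorem inner_comm : ∀ {n} (x y : CD n), CD.inner x y = CD.inner y x
  | 0, x, y => mul_comm (show ℝ from x) y
  | _ + 1, x, y => congrArg₂ (· + ·) (inner_comm x.1 y.1) (inner_comm x.2 y.2)

theorem inner_add_left : ∀ {n} (x y z : CD n), CD.inner (x + y) z = CD.inner x z + CD.inner y z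
  | 0, x, y, z => add_mul (show ℝ from x) y z
  | _ + 1, x, y, z => by
    change CD.inner (x.1 + y.1) z.1 + CD.inner (x.2 + y.2) z.2 =
      (CD.inner x.1 z.1 + CD.inner x.2 z.2) + (CD.inner y.1 z.1 + CD.inner y.2 z.2)
    rw [inner_add_left, inner_add_left]
    ring

theorem inner_smul_left : ∀ {n} (r : ℝ) (x y : CD n), CD.inner (r • x) y = r * CD.inner x y
  | 0, r, x, y => mul_assoc r (show ℝ from x) y
  | _ + 1, r, x, y => by
    change CD.inner (r • x.1) y.1 + CD.inner (r • x.2) y.2 = r * (CD.inner x.1 y.1 + CD.inner x.2 y.2)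
    rw [inner_smul_left, inner_smul_left, mul_add]

def innerₗ (n : ℕ) : CD n →ₗ[ℝ] CD n →ₗ[ℝ] ℝ :=
  LinearMap.mk₂ ℝ CD.inner inner_add_left inner_smul_left
    (fun x y z => by rw [inner_comm, inner_add_left, inner_comm y, inner_comm z])
    (fun r x y => by rw [inner_comm, inner_smul_left, inner_comm, smul_eq_mul])

section Bilinear

variable {n : ℕ} (x y z : CD n) (r : ℝ)

theorem inner_add_right : CD.inner x (y + z) = CD.inner x y + CD.inner x z :=
  (innerₗ n x).map_add y z

theorem inner_smul_right : CD.inner x (r • y) = r * CD.inner x y :=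
  ((innerₗ n x).map_smul r y).trans (smul_eq_mul r _)

theorem inner_sub_left : CD.inner (x - y) z = CD.inner x z - CD.inner y z :=
  LinearMap.map_sub₂ (innerₗ n) x y z

theorem inner_sub_right : CD.inner x (y - z) = CD.inner x y - CD.inner x z :=
  (innerₗ n x).map_sub y z

theorem inner_neg_left : CD.inner (-x) y = -CD.inner x y :=
  LinearMap.map_neg₂ (innerₗ n) x y

theorem inner_neg_right : CD.inner x (-y) = -CD.inner x y :=
  (innerₗ n x).map_neg y

theorem inner_zero_right : CD.inner x 0 = 0 :=
  (innerₗ n x).map_zero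

end Bilinear

theorem norm_eq_one_iff {n : ℕ} (x : CD n) : CD.norm x = 1 ↔ CD.inner x x = 1 :=
  Real.sqrt_eq_one

theorem conj_add : ∀ {n} (x y : CD n), CD.conj (x + y) = CD.conj x + CD.conj y
  | 0, _, _ => rfl
  | _ + 1, x, y => Prod.ext (conj_add x.1 y.1) (neg_add x.2 y.2)

theorem conj_smul : ∀ {n} (r : ℝ) (x : CD n), CD.conj (r • x) = r • CD.conj x
  | 0, _, _ => rfl
  | _ + 1, r, x => Prod.ext (conj_smul r x.1) (smul_neg r x.2).symm

theorem inner_conj_e0 : ∀ {n} (x : CD n), CD.inner (CD.conj x) (e0 n) = CD.inner x (e0 n)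
  | 0, _ => rfl
  | _ + 1, x => by
    change CD.inner (CD.conj x.1) (e0 _) + CD.inner (-x.2) 0 = CD.inner x.1 (e0 _) + CD.inner x.2 0
    rw [inner_conj_e0, inner_zero_right, inner_zero_right]

theorem IsPure.add {n : ℕ} {x y : CD n} (hx : IsPure x) (hy : IsPure y) : IsPure (x + y) := by
  unfold IsPure at *
  rw [conj_add, add_add_add_comm, hx, hy, add_zero]

theorem IsPure.smul {n : ℕ} (r : ℝ) {x : CD n} (hx : IsPure x) : IsPure (r • x) := by
  unfold IsPure at *
  rw [conj_smul, ← smul_add, hx, smul_zero]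

theorem IsPure.inner_e0 {n : ℕ} {x : CD n} (hx : IsPure x) : CD.inner x (e0 n) = 0 := by
  have h := congrArg (CD.inner · (e0 n)) hx
  simp only [inner_add_left, inner_conj_e0, inner_comm 0, inner_zero_right] at h
  linarith

theorem IsDoublyPure.add : ∀ {n} {x y : CD n}, IsDoublyPure x → IsDoublyPure y →
    IsDoublyPure (x + y)
  | 0, _, _, hx, hy => by
    change _ = (0 : ℝ) at hx hy
    change (_ : ℝ) + _ = 0
    rw [hx, hy, add_zero]
  | _ + 1, _, _, hx, hy => ⟨hx.1.add hy.1, hx.2.add hy.2⟩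

theorem IsDoublyPure.smul : ∀ {n} (r : ℝ) {x : CD n}, IsDoublyPure x → IsDoublyPure (r • x)
  | 0, r, _, hx => by
    change _ = (0 : ℝ) at hx
    change r * _ = (0 : ℝ)
    rw [hx, mul_zero]
  | _ + 1, r, _, hx => ⟨hx.1.smul r, hx.2.smul r⟩

theorem IsDoublyPure.sub {n : ℕ} {x y : CD n} (hx : IsDoublyPure x) (hy : IsDoublyPure y) :
    IsDoublyPure (x - y) := by
  rw [sub_eq_add_neg, ← neg_one_smul ℝ y]
  exact hx.add (hy.smul (-1))

theorem IsDoublyPure.inner_e0 : ∀ {n} {x : CD n}, IsDoublyPure x → CD.inner x (e0 n) = 0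
  | 0, _, hx => by
    change _ = (0 : ℝ) at hx
    change (_ : ℝ) * 1 = 0
    rw [hx, zero_mul]
  | _ + 1, x, hx => by
    change CD.inner x.1 (e0 _) + CD.inner x.2 0 = 0
    rw [hx.1.inner_e0, inner_zero_right, add_zero]

theorem IsDoublyPure.inner_te0 : ∀ {n} {x : CD n}, IsDoublyPure x → CD.inner x (te0 n) = 0
  | 0, x, _ => inner_zero_right x
  | _ + 1, x, hx => by
    change CD.inner x.1 0 + CD.inner x.2 (e0 _) = 0
    rw [hx.2.inner_e0, inner_zero_right, add_zero]

theorem tilde_sub : ∀ {n} (x y : CD n), tilde (x - y) = tilde x - tilde y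
  | 0, _, _ => (sub_zero (0 : CD 0)).symm
  | _ + 1, x, y => Prod.ext (neg_sub' x.2 y.2) rfl

theorem tilde_smul : ∀ {n} (r : ℝ) (x : CD n), tilde (r • x) = r • tilde x
  | 0, r, _ => (smul_zero r).symm
  | _ + 1, r, x => Prod.ext (smul_neg r x.2).symm rfl

theorem inner_tilde_left : ∀ {n} (x y : CD n), CD.inner (tilde x) y = -CD.inner x (tilde y)
  | 0, x, y => by
    change CD.inner 0 y = -CD.inner x 0
    rw [inner_comm, inner_zero_right, inner_zero_right, neg_zero]
  | _ + 1, x, y => by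
    change CD.inner (-x.2) y.1 + CD.inner x.1 y.2 = -(CD.inner x.1 (-y.2) + CD.inner x.2 y.1)
    rw [inner_neg_left, inner_neg_right, inner_comm x.2]
    ring

theorem inner_self_tilde {n : ℕ} (x : CD n) : CD.inner x (tilde x) = 0 := by
  have h := inner_tilde_left x x
  rw [inner_comm] at h
  linarith

theorem tilde_mem_Ha {n : ℕ} (a : CD n) : tilde a ∈ Ha a :=
  Submodule.subset_span (by simp)

/-- Of the spanning vectors of `ℍ_a`, `e₀` and `ẽ₀` are orthogonal to every doubly pure `x`. -/
theorem IsDoublyPure.mem_HaPerp {n : ℕ} {a x : CD n} (hx : IsDoublyPure x)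
    (hxa : CD.inner x a = 0) (hxta : CD.inner x (tilde a) = 0) : x ∈ HaPerp a := by
  suffices Ha a ≤ LinearMap.ker (innerₗ n x) from fun y hy => this hy
  refine Submodule.span_le.2 ?_
  rintro y (rfl | rfl | rfl | rfl)
  exacts [hx.inner_e0, hxta, hxa, hx.inner_te0]

end CD

def rotate {n : ℕ} (r s : ℝ) (p : CD n × CD n) : CD n × CD n :=
  (r • p.1 - s • p.2, s • p.1 + r • p.2)

open CD

theorem rotate_mem_V2 {n : ℕ} {r s : ℝ} (hrs : r ^ 2 + s ^ 2 = 1) {p : CD n × CD n}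
    (hp : p ∈ V2 n) : rotate r s p ∈ V2 n := by
  obtain ⟨ha, hb, hna, hnb, hab⟩ := hp
  rw [norm_eq_one_iff] at hna hnb
  have hba := (inner_comm p.1 p.2).symm.trans hab
  refine ⟨(ha.smul r).sub (hb.smul s), (ha.smul s).add (hb.smul r), ?_, ?_, ?_⟩
  · rw [norm_eq_one_iff]
    simp only [rotate, inner_sub_left, inner_sub_right, inner_smul_left, inner_smul_right,
      hna, hnb, hab, hba]
    linear_combination hrs
  · rw [norm_eq_one_iff]
    simp only [rotate, inner_add_left, inner_add_right, inner_smul_left, inner_smul_right,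
      hna, hnb, hab, hba]
    linear_combination hrs
  · simp only [rotate, inner_sub_left, inner_add_right, inner_smul_left, inner_smul_right,
      hna, hnb, hab, hba]
    ring

theorem rotate_mem_W {n : ℕ} {r s : ℝ} (hrs : r ^ 2 + s ^ 2 = 1) {p : CD n × CD n}
    (hp : p ∈ W n) : rotate r s p ∈ W n := by
  obtain ⟨hV, hperp⟩ := hp
  have hV' := rotate_mem_V2 hrs hV
  refine ⟨hV', hV'.2.1.mem_HaPerp ((inner_comm _ _).trans hV'.2.2.2.2) ?_⟩
  have hbta := hperp _ (tilde_mem_Ha p.1)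
  have hatb : CD.inner p.1 (tilde p.2) = 0 := by
    rw [← neg_eq_zero, ← inner_tilde_left, inner_comm, hbta]
  simp only [rotate, tilde_sub, tilde_smul, inner_add_left, inner_sub_right, inner_smul_left,
    inner_smul_right, inner_self_tilde, hbta, hatb]
  ring

theorem statement8_general (n : ℕ) (a b : CD n)
    (ha : CD.IsDoublyPure a) (hb : CD.IsDoublyPure b)
    (hna : CD.norm a = 1) (hnb : CD.norm b = 1)
    (h1 : CD.inner a b = 0) (h2 : CD.inner (CD.tilde a) b = 0)
    (r s : ℝ) (hrs : r ^ 2 + s ^ 2 = 1) :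
    CD.inner (r • a - s • b) (s • a + r • b) = 0 ∧
    CD.inner (CD.tilde (r • a - s • b)) (s • a + r • b) = 0 ∧
    (r • a - s • b, s • a + r • b) ∈ W n := by
  have hW : (a, b) ∈ W n :=
    ⟨⟨ha, hb, hna, hnb, h1⟩,
      hb.mem_HaPerp ((inner_comm b a).trans h1) ((inner_comm b _).trans h2)⟩
  have hW' := rotate_mem_W hrs hW
  refine ⟨hW'.1.2.2.2.2, ?_, hW'⟩
  rw [inner_comm]
  exact hW'.2 _ (tilde_mem_Ha _)

/-- For `n ≥ 3`, `W_{2^{n-1}-1,2}` is invariant under the circle action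
`((r,s),(a,b)) ↦ (ra - sb, sa + rb)`. -/
theorem statement8 (n : ℕ) (hn : 3 ≤ n) (a b : CD n)
    (ha : CD.IsDoublyPure a) (hb : CD.IsDoublyPure b)
    (hna : CD.norm a = 1) (hnb : CD.norm b = 1)
    (h1 : CD.inner a b = 0) (h2 : CD.inner (CD.tilde a) b = 0)
    (h3 : CD.inner a (CD.tilde b) = 0)
    (r s : ℝ) (hrs : r ^ 2 + s ^ 2 = 1) :
    CD.inner (r • a - s • b) (s • a + r • b) = 0 ∧
    CD.inner (CD.tilde (r • a - s • b)) (s • a + r • b) = 0 ∧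
    (r • a - s • b, s • a + r • b) ∈ W n :=
  statement8_general n a b ha hb hna hnb h1 h2 r s hrs
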